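/- With E and μ as above (μ = Σ_n (b_n − a_n)(δ_{a_n} + δ_{b_n})), for each n and each t ∈ (a_n, b_n), the potential satisfies V₂(μ)(e^{it}) ≥ c·(b_n − a_n)/dist(e^{it}, {e^{ia_n}, e^{ib_n}})² ≥ c/(b_n − a_n), for an absolute constant c > 0. -/

import Mathlib

/-!
Take `c = 1`. For `t ∈ (a_n, b_n)` the nearer endpoint is at chord distance
`d ≤ |t - a_n| ≤ b_n - a_n`, which gives the first inequality, and `d > 0` because the arc
has length at most `2π`. The second inequality keeps only the `n`-th term of the series
and bounds `1 / d²` by the sum of the two reciprocal squared distances.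
-/

open MeasureTheory

/-- The point e^{it} on the unit circle. -/
noncomputable def circlePt (t : ℝ) : ℂ := Complex.exp (t * Complex.I)

lemma circlePt_eq_circleMap (t : ℝ) : circlePt t = circleMap 0 1 t := by
  simp [circlePt, circleMap]

lemma norm_circlePt_sub_le (t s : ℝ) : ‖circlePt t - circlePt s‖ ≤ |t - s| := by
  simpa [circlePt_eq_circleMap, dist_eq_norm, Real.dist_eq] using
    (lipschitzWith_circleMap (0 : ℂ) 1).dist_le_mul t s

lemma norm_circlePt_sub_pos {s t : ℝ} (hst : s < t) (hts : t < s + 2 * Real.pi) :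
    0 < ‖circlePt t - circlePt s‖ := by
  rw [norm_pos_iff, sub_ne_zero, circlePt_eq_circleMap, circlePt_eq_circleMap]
  have hinj := injOn_circleMap_of_abs_sub_le' (c := 0) one_ne_zero
    (show s + 2 * Real.pi - s ≤ 2 * Real.pi by linarith)
  exact hinj.ne ⟨hst.le, hts⟩ ⟨le_rfl, by linarith [Real.pi_pos]⟩ hst.ne'

lemma div_le_mul_div_sq_of_le {c ℓ d : ℝ} (hc : 0 ≤ c) (hd : 0 < d) (hdℓ : d ≤ ℓ) :
    c / ℓ ≤ c * ℓ / d ^ 2 := by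
  have hℓ : 0 < ℓ := hd.trans_le hdℓ
  rw [div_le_div_iff₀ hℓ (by positivity), mul_assoc]
  gcongr
  nlinarith

lemma one_div_min_sq_le_add (x y : ℝ) : 1 / min x y ^ 2 ≤ 1 / x ^ 2 + 1 / y ^ 2 := by
  rcases min_choice x y with h | h <;> rw [h]
  · exact le_add_of_nonneg_right (by positivity)
  · exact le_add_of_nonneg_left (by positivity)

/-- with μ = Σ_n (b_n − a_n)(δ_{e^{ia_n}} + δ_{e^{ib_n}}), for each n
and t ∈ (a_n, b_n), V₂(μ)(e^{it}) ≥ c(b_n − a_n)/dist(e^{it},{e^{ia_n},e^{ib_n}})²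
≥ c/(b_n − a_n), for an absolute constant c > 0. -/
theorem stmt_7 : ∃ c : ℝ, 0 < c ∧
    ∀ (a b : ℕ → ℝ), (∀ n, a n < b n) →
    (∀ n, Set.Ioo (a n) (b n) ⊆ Set.Ioo 0 (2 * Real.pi)) →
    ∀ n : ℕ, ∀ t ∈ Set.Ioo (a n) (b n),
      ENNReal.ofReal (c / (b n - a n)) ≤
        ENNReal.ofReal (c * (b n - a n) /
          (min ‖circlePt t - circlePt (a n)‖ ‖circlePt t - circlePt (b n)‖) ^ 2) ∧
      ENNReal.ofReal (c * (b n - a n) /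
          (min ‖circlePt t - circlePt (a n)‖ ‖circlePt t - circlePt (b n)‖) ^ 2) ≤
        ∑' m, ENNReal.ofReal ((b m - a m) *
          (1 / ‖circlePt t - circlePt (a m)‖ ^ 2 +
            1 / ‖circlePt t - circlePt (b m)‖ ^ 2)) := by
  refine ⟨1, one_pos, fun a b hab hsub n t ⟨hat, htb⟩ => ?_⟩
  obtain ⟨ha, hb⟩ := (Set.Ioo_subset_Ioo_iff (hab n)).mp (hsub n)
  set d := min ‖circlePt t - circlePt (a n)‖ ‖circlePt t - circlePt (b n)‖
  have hd_pos : 0 < d := lt_min (norm_circlePt_sub_pos hat (by linarith))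
    (by rw [norm_sub_rev]; exact norm_circlePt_sub_pos htb (by linarith))
  have hd_le : d ≤ b n - a n := calc
    d ≤ ‖circlePt t - circlePt (a n)‖ := min_le_left _ _
    _ ≤ |t - a n| := norm_circlePt_sub_le t (a n)
    _ ≤ b n - a n := by rw [abs_of_pos (by linarith)]; linarith
  refine ⟨ENNReal.ofReal_le_ofReal (div_le_mul_div_sq_of_le zero_le_one hd_pos hd_le),
    le_trans (ENNReal.ofReal_le_ofReal ?_) (ENNReal.le_tsum n)⟩
  rw [one_mul, div_eq_mul_one_div]
  exact mul_le_mul_of_nonneg_left (one_div_min_sq_le_add _ _) (sub_pos.mpr (hab n)).le
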